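/- Fix k ≥ 2 and n ≥ m ≥ 1. Let q : ({0,1}^n)^k → {0,1} be the indicator that ⊕_{e=1}^k z_e^{1:m} ∈ {0^m, 1^m}. Then for any f : ({0,1}^n)^k → {0,1} and any s ∈ {0,1}^n, the Fourier coefficient of the product qf at the repeated string (s,…,s) satisfies: (qf)^(s,…,s) = 2^{1−m} · ∑_{t ∈ {0,1}^m, |t| odd} f̂((t s^{m+1:n}, …, t s^{m+1:n})), where t s^{m+1:n} denotes the n-bit string with first m bits t and remaining bits equal to those of s. -/

import Mathlib

open Finset

/-- Boolean Fourier transform on `({0,1}^n)^k`, identified with `{0,1}^{kn}`. -/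
noncomputable def fourP {k n : ℕ} (f : (Fin k → Fin n → Bool) → ℝ)
    (s : Fin k → Fin n → Bool) : ℝ :=
  ((2 : ℝ) ^ (k * n))⁻¹ *
    ∑ z : Fin k → Fin n → Bool,
      f z * (-1 : ℝ) ^
        (univ.filter fun p : Fin k × Fin n => s p.1 p.2 = true ∧ z p.1 p.2 = true).card

/-- Bit `j < m` of the XOR `⊕_e z_e`. -/
def xorBit {k n m : ℕ} (hmn : m ≤ n) (Z : Fin k → Fin n → Bool) (j : Fin m) : Prop :=
  (univ.filter fun e : Fin k => Z e (Fin.castLE hmn j) = true).card % 2 = 1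

instance {k n m : ℕ} (hmn : m ≤ n) (Z : Fin k → Fin n → Bool) (j : Fin m) :
    Decidable (xorBit hmn Z j) := by unfold xorBit; infer_instance

/-- Indicator that the first `m` bits of `⊕_e z_e` are all `0` or all `1`. -/
def qInd {k n m : ℕ} (hmn : m ≤ n) (Z : Fin k → Fin n → Bool) : ℝ :=
  if (∀ j : Fin m, xorBit hmn Z j) ∨ (∀ j : Fin m, ¬ xorBit hmn Z j) then 1 else 0

/-! The indicator `q` depends only on the first `m` bits `x` of `⊕_e z_e`, and
`[x ∈ {0^m, 1^m}] = 2^{1-m} ∑_{|t| even} (-1)^{t·x}`. Since `t·x = ∑_e t·z_e^{1:m}`, each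
`(-1)^{t·x}` is the Walsh character of the repeated string `(t0^{n-m}, …, t0^{n-m})`, and
multiplying by a Walsh character shifts the Fourier transform: `(χ_r f)^(s) = f̂(s ⊕ r)`. -/

section SignSums

variable {α : Type*} [Fintype α]

lemma neg_one_pow_card_filter (P : α → Prop) [DecidablePred P] :
    (-1 : ℝ) ^ #{a | P a} = ∏ a, if P a then -1 else 1 := by
  rw [← prod_const, prod_filter]

lemma sum_neg_one_pow_card_filter_and [DecidableEq α] (P : α → Prop) [DecidablePred P] :
    ∑ t : α → Bool, (-1 : ℝ) ^ #{a | t a = true ∧ P a} =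
      if ∀ a, ¬ P a then 2 ^ Fintype.card α else 0 := by
  simp_rw [neg_one_pow_card_filter]
  rw [← Fintype.prod_sum fun a (b : Bool) => if b = true ∧ P a then (-1 : ℝ) else 1]
  split_ifs with h
  · simp [h]
  · push Not at h
    obtain ⟨a, ha⟩ := h
    exact prod_eq_zero (mem_univ a) (by simp [ha])

lemma neg_one_pow_card_mul_neg_one_pow_card_filter_and (t : α → Bool) (P : α → Prop)
    [DecidablePred P] :
    (-1 : ℝ) ^ #{a | t a = true} * (-1) ^ #{a | t a = true ∧ P a} =
      (-1) ^ #{a | t a = true ∧ ¬ P a} := by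
  simp_rw [neg_one_pow_card_filter, ← prod_mul_distrib]
  refine prod_congr rfl fun a _ => ?_
  by_cases ht : t a = true <;> by_cases hP : P a <;> simp [ht, hP]

lemma ite_forall_or_forall_not_eq_sum [DecidableEq α] [Nonempty α] (P : α → Prop)
    [DecidablePred P] :
    (if (∀ a, P a) ∨ (∀ a, ¬ P a) then (1 : ℝ) else 0) =
      2 * ((2 : ℝ) ^ Fintype.card α)⁻¹ *
        ∑ t : α → Bool with Even #{a | t a = true}, (-1 : ℝ) ^ #{a | t a = true ∧ P a} := by
  have hterm : ∀ t : α → Bool,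
      (if Even #{a | t a = true} then (-1 : ℝ) ^ #{a | t a = true ∧ P a} else 0) =
        ((-1) ^ #{a | t a = true ∧ P a} + (-1) ^ #{a | t a = true ∧ ¬ P a}) / 2 := by
    intro t
    rw [← neg_one_pow_card_mul_neg_one_pow_card_filter_and]
    rcases Nat.even_or_odd #{a | t a = true} with h | h
    · rw [if_pos h, h.neg_one_pow]; ring
    · rw [if_neg (Nat.not_even_iff_odd.mpr h), h.neg_one_pow]; ring
  rw [sum_filter]
  simp_rw [hterm]
  rw [← sum_div, sum_add_distrib, sum_neg_one_pow_card_filter_and,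
    sum_neg_one_pow_card_filter_and]
  obtain ⟨a⟩ := ‹Nonempty α›
  have hexcl : ¬ ((∀ a, P a) ∧ ∀ a, ¬ P a) := fun h => h.2 a (h.1 a)
  simp only [not_not]
  split_ifs <;> first | tauto | (field_simp; ring)

end SignSums

section Fourier

variable {k n : ℕ}

def walsh (r Z : Fin k → Fin n → Bool) : ℝ :=
  (-1) ^ #{p : Fin k × Fin n | r p.1 p.2 = true ∧ Z p.1 p.2 = true}

lemma fourP_eq_sum_walsh (f : (Fin k → Fin n → Bool) → ℝ) (s : Fin k → Fin n → Bool) :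
    fourP f s = ((2 : ℝ) ^ (k * n))⁻¹ * ∑ Z, f Z * walsh s Z :=
  rfl

lemma walsh_mul_walsh (r r' Z : Fin k → Fin n → Bool) :
    walsh r Z * walsh r' Z = walsh (fun e j => xor (r e j) (r' e j)) Z := by
  simp only [walsh, neg_one_pow_card_filter, ← prod_mul_distrib]
  refine prod_congr rfl fun p _ => ?_
  cases r p.1 p.2 <;> cases r' p.1 p.2 <;> cases Z p.1 p.2 <;> simp

lemma fourP_walsh_mul (f : (Fin k → Fin n → Bool) → ℝ) (r s : Fin k → Fin n → Bool) :
    fourP (fun Z => walsh r Z * f Z) s = fourP f (fun e j => xor (s e j) (r e j)) := by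
  simp only [fourP_eq_sum_walsh, ← walsh_mul_walsh]
  congr 1
  exact sum_congr rfl fun Z _ => by ring

lemma fourP_const_mul (c : ℝ) (f : (Fin k → Fin n → Bool) → ℝ) (s : Fin k → Fin n → Bool) :
    fourP (fun Z => c * f Z) s = c * fourP f s := by
  simp only [fourP_eq_sum_walsh, mul_assoc, ← mul_sum]
  ring

lemma fourP_sum {ι : Type*} (T : Finset ι) (g : ι → (Fin k → Fin n → Bool) → ℝ)
    (s : Fin k → Fin n → Bool) :
    fourP (fun Z => ∑ i ∈ T, g i Z) s = ∑ i ∈ T, fourP (g i) s := by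
  simp only [fourP_eq_sum_walsh, sum_mul, ← mul_sum]
  rw [sum_comm]

end Fourier

def zeroExtend {m n : ℕ} (t : Fin m → Bool) (j : Fin n) : Bool :=
  if h : (j : ℕ) < m then t ⟨j, h⟩ else false

lemma neg_one_pow_card_xorBit {k n m : ℕ} (hmn : m ≤ n) (t : Fin m → Bool)
    (Z : Fin k → Fin n → Bool) :
    (-1 : ℝ) ^ #{j | t j = true ∧ xorBit hmn Z j} = walsh (fun _ => zeroExtend t) Z := by
  have hbit : ∀ j : Fin m, (if t j = true ∧ xorBit hmn Z j then (-1 : ℝ) else 1) =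
      ∏ e, if t j = true ∧ Z e (Fin.castLE hmn j) = true then -1 else 1 := by
    intro j
    cases t j
    · simp
    · simp only [true_and, ← neg_one_pow_card_filter, xorBit]
      rcases Nat.even_or_odd #{e | Z e (Fin.castLE hmn j) = true} with h | h
      · rw [h.neg_one_pow, if_neg (by rw [Nat.even_iff] at h; omega)]
      · rw [h.neg_one_pow, if_pos (Nat.odd_iff.mp h)]
  rw [walsh, neg_one_pow_card_filter, neg_one_pow_card_filter, Fintype.prod_prod_type_right]
  refine Fintype.prod_of_injective (Fin.castLE hmn) (Fin.castLE_injective hmn) _ _ ?_ ?_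
  · intro j hj
    have : ¬ (j : ℕ) < m := fun h => hj ⟨⟨j, h⟩, rfl⟩
    simp [zeroExtend, this]
  · intro j
    simp [hbit, zeroExtend]

lemma qInd_eq_sum_walsh {k n m : ℕ} (hm : 1 ≤ m) (hmn : m ≤ n) (Z : Fin k → Fin n → Bool) :
    qInd hmn Z = 2 * ((2 : ℝ) ^ m)⁻¹ *
      ∑ t : Fin m → Bool with Even #{j | t j = true}, walsh (fun _ => zeroExtend t) Z := by
  have : Nonempty (Fin m) := ⟨⟨0, hm⟩⟩
  have h := ite_forall_or_forall_not_eq_sum (xorBit hmn Z)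
  simp_rw [Fintype.card_fin, neg_one_pow_card_xorBit] at h
  rw [qInd]
  -- the two sides differ only in the `Decidable` instance of the condition
  convert h

theorem stmt6_general (k n m : ℕ) (hm : 1 ≤ m) (hmn : m ≤ n)
    (f : (Fin k → Fin n → Bool) → ℝ) (s : Fin n → Bool) :
    fourP (fun Z => qInd hmn Z * f Z) (fun _ => s) =
      2 * ((2 : ℝ) ^ m)⁻¹ *
        ∑ t : Fin m → Bool,
          if Even (univ.filter fun j => t j = true).card then
            fourP f (fun _ (j : Fin n) =>
              if h : (j : ℕ) < m then xor (s j) (t ⟨j, h⟩) else s j)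
          else 0 := by
  have hq : (fun Z => qInd hmn Z * f Z) = fun Z => 2 * ((2 : ℝ) ^ m)⁻¹ *
      ∑ t : Fin m → Bool with Even #{j | t j = true}, walsh (fun _ => zeroExtend t) Z * f Z := by
    funext Z
    rw [qInd_eq_sum_walsh hm hmn, mul_assoc, sum_mul]
  have hshift : ∀ t : Fin m → Bool, (fun (_ : Fin k) (j : Fin n) => xor (s j) (zeroExtend t j)) =
      fun (_ : Fin k) (j : Fin n) => if h : (j : ℕ) < m then xor (s j) (t ⟨j, h⟩) else s j := by
    intro t
    funext _ j
    by_cases h : (j : ℕ) < m <;> simp [zeroExtend, h]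
  rw [hq, fourP_const_mul, fourP_sum, sum_filter]
  simp_rw [fourP_walsh_mul, hshift]

/-- Fourier coefficients of the product `q·f` at a repeated string `(s,…,s)`:
`(qf)^((s)_e) = 2^{1−m} ∑_{t ∈ {0,1}^m, |t| even} f̂(((s^{1:m}⊕t) s^{m+1:n})_e)`. -/
theorem stmt6 (k n m : ℕ) (hk : 2 ≤ k) (hm : 1 ≤ m) (hmn : m ≤ n)
    (f : (Fin k → Fin n → Bool) → ℝ) (s : Fin n → Bool) :
    fourP (fun Z => qInd hmn Z * f Z) (fun _ => s) =
      2 * ((2 : ℝ) ^ m)⁻¹ *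
        ∑ t : Fin m → Bool,
          if Even (univ.filter fun j => t j = true).card then
            fourP f (fun _ (j : Fin n) =>
              if h : (j : ℕ) < m then xor (s j) (t ⟨j, h⟩) else s j)
          else 0 :=
  stmt6_general k n m hm hmn f s
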